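/- Let X be a nonempty set, f1, f2 : X → ℝ, and F : ℝ × ℝ → ℝ be monotonically increasing in its first argument and monotonically decreasing in its second argument. Suppose x* maximizes x ↦ F(f1(x), f2(x)) over X, and we are given grid points b_1 ≤ ... ≤ b_L with b_{l*-1} ≤ f2(x*) ≤ b_{l*} for some index l*. For each l, let x_l maximize f1 over {x : f2(x) ≤ b_l}. Then max_l F(f1(x_l), b_l) ≤ F(f1(x*), f2(x*)) ≤ F(f1(x_{l*}), b_{l*-1}) ≤ max_l F(f1(x_l), b_{l-1}). -/
import Mathlib

/-- Theorem (Optimal Solution of ILP with Upper Bound on Variance). -/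
theorem robust_bound
    {X : Type*} [Nonempty X]
    (f1 f2 : X → ℝ) (F : ℝ → ℝ → ℝ)
    (hF1 : ∀ b : ℝ, Monotone (fun a => F a b))
    (hF2 : ∀ a : ℝ, Antitone (F a))
    (L : ℕ) (hL : 1 ≤ L) (b : ℕ → ℝ)
    (hb : ∀ l l', l ≤ l' → b l ≤ b l')
    (xstar : X) (hxstar : ∀ x : X, F (f1 x) (f2 x) ≤ F (f1 xstar) (f2 xstar))
    (lstar : ℕ) (hlstar : lstar ∈ Finset.Icc 1 L)
    (hlow : b (lstar - 1) ≤ f2 xstar) (hhigh : f2 xstar ≤ b lstar)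
    (xl : ℕ → X)
    (hfeas : ∀ l, f2 (xl l) ≤ b l)
    (hopt : ∀ l, ∀ x : X, f2 x ≤ b l → f1 x ≤ f1 (xl l)) :
    (Finset.Icc 1 L).sup' (Finset.nonempty_Icc.mpr hL)
        (fun l => F (f1 (xl l)) (b l)) ≤ F (f1 xstar) (f2 xstar)
    ∧ F (f1 xstar) (f2 xstar) ≤ F (f1 (xl lstar)) (b (lstar - 1))
    ∧ F (f1 (xl lstar)) (b (lstar - 1)) ≤
        (Finset.Icc 1 L).sup' (Finset.nonempty_Icc.mpr hL)
          (fun l => F (f1 (xl l)) (b (l - 1))) := by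
  refine ⟨?_, ?_, ?_⟩
  · apply Finset.sup'_le
    intro l _
    calc F (f1 (xl l)) (b l) ≤ F (f1 (xl l)) (f2 (xl l)) := hF2 _ (hfeas l)
      _ ≤ F (f1 xstar) (f2 xstar) := hxstar _
  · calc F (f1 xstar) (f2 xstar) ≤ F (f1 (xl lstar)) (f2 xstar) :=
        hF1 _ (hopt lstar xstar hhigh)
      _ ≤ F (f1 (xl lstar)) (b (lstar - 1)) := hF2 _ hlow
  · exact Finset.le_sup' (fun l => F (f1 (xl l)) (b (l - 1))) hlstar
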